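/- arXiv:2309.13493 — 4 statements merged into one kernel-verified Lean document; each statement's English description precedes it below -/
import Mathlib

section
/- For every integer k ≥ 2, every real λ > 0, and every integer n with 2 ≤ n ≤ k, one has h_k(n−1;λ) < h_k(n;λ); that is, the sequence h_k(1;λ), h_k(2;λ), …, h_k(k;λ) is strictly increasing. -/
/-- Scaled pmf of the Poisson distribution of order `k`:
`h_k(n;λ) = Σ λ^(n₁+⋯+n_k)/(n₁!⋯n_k!)`, summed over all `k`-tuples `(n₁,…,n_k)`
of nonnegative integers with `n₁ + 2n₂ + ⋯ + k·n_k = n`.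
(Each `n_i` is at most `n` whenever the constraint holds, so the range is exhaustive.) -/
noncomputable def poissonOrderH (k n : ℕ) (lam : ℝ) : ℝ :=
  ∑ t ∈ (Fintype.piFinset fun _ : Fin k => Finset.range (n + 1)) |>.filter
      (fun t => ∑ i : Fin k, ((i : ℕ) + 1) * t i = n),
    lam ^ (∑ i : Fin k, t i) / ∏ i : Fin k, (Nat.factorial (t i) : ℝ)

/-- Pmf of the Poisson distribution of order `k`: `f_k(n;λ) = e^{-kλ} h_k(n;λ)`. -/
noncomputable def poissonOrderPmf (k n : ℕ) (lam : ℝ) : ℝ :=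
  Real.exp (-(k * lam)) * poissonOrderH k n lam

/-!
A tuple `t : Fin k → ℕ` encodes the partition with `t i` parts of size `i + 1`, so `h_k(n; λ)` is
a sum over partitions of `n` into parts of size at most `k`, each weighted by `λ^{Σ t} / ∏ t_i!`.
For `1 ≤ m < k`, replacing one largest part `p` of a partition of `m` by a part `p + 1` gives a
partition of `m + 1` (as `p + 1 ≤ k`) with the same number of parts and no larger `∏ t_i!`, since
the part size `p + 1` did not occur before. This map is injective (the new largest part is `p + 1`)
and misses the partition of `m + 1` into ones, whose weight is positive.
-/

open Finset Function Nat

namespace PoissonOrder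

variable {k : ℕ}

def weight (t : Fin k → ℕ) : ℕ := ∑ i : Fin k, ((i : ℕ) + 1) * t i

noncomputable def term (lam : ℝ) (t : Fin k → ℕ) : ℝ := lam ^ (∑ i, t i) / ∏ i, ((t i)! : ℝ)

def tuples (k n : ℕ) : Finset (Fin k → ℕ) :=
  (Fintype.piFinset fun _ : Fin k => range (n + 1)).filter fun t => weight t = n

theorem poissonOrderH_eq_sum_tuples (k n : ℕ) (lam : ℝ) :
    poissonOrderH k n lam = ∑ t ∈ tuples k n, term lam t :=
  rfl

theorem le_weight (t : Fin k → ℕ) (i : Fin k) : ((i : ℕ) + 1) * t i ≤ weight t :=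
  single_le_sum (f := fun i : Fin k => ((i : ℕ) + 1) * t i) (fun _ _ => Nat.zero_le _) (mem_univ i)

theorem mem_tuples {n : ℕ} {t : Fin k → ℕ} : t ∈ tuples k n ↔ weight t = n := by
  simp only [tuples, mem_filter, Fintype.mem_piFinset, mem_range, and_iff_right_iff_imp]
  rintro rfl i
  exact Nat.lt_succ_of_le ((Nat.le_mul_of_pos_left _ (succ_pos _)).trans (le_weight t i))

@[simp]
theorem weight_zero : weight (0 : Fin k → ℕ) = 0 := by
  simp [weight]

theorem weight_add (s t : Fin k → ℕ) : weight (s + t) = weight s + weight t := by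
  simp only [weight, Pi.add_apply, mul_add, sum_add_distrib]

theorem weight_single (i : Fin k) (a : ℕ) : weight (Pi.single i a) = ((i : ℕ) + 1) * a := by
  simp [weight, Pi.single_apply]

theorem term_pos {lam : ℝ} (hlam : 0 < lam) (t : Fin k → ℕ) : 0 < term lam t := by
  unfold term
  positivity

theorem term_nonneg {lam : ℝ} (hlam : 0 ≤ lam) (t : Fin k → ℕ) : 0 ≤ term lam t := by
  unfold term
  positivity

theorem term_add_single_one (lam : ℝ) (u : Fin k → ℕ) (i : Fin k) :
    term lam (u + Pi.single i 1) = lam * term lam u / (u i + 1) := by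
  have hprod : ∏ j, (((u + Pi.single i 1 : Fin k → ℕ) j)! : ℝ) = (u i + 1) * ∏ j, ((u j)! : ℝ) := by
    rw [← mul_prod_erase univ _ (mem_univ i), ← mul_prod_erase univ (fun j => ((u j)! : ℝ)) (mem_univ i),
      prod_congr rfl fun j hj => by rw [Pi.add_apply, Pi.single_eq_of_ne (ne_of_mem_erase hj), add_zero]]
    simp [factorial_succ, mul_assoc]
  have hsum : ∑ j, (u + Pi.single i 1 : Fin k → ℕ) j = ∑ j, u j + 1 := by
    simp [sum_add_distrib]
  rw [term, term, hprod, hsum, pow_succ]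
  field_simp

-- `0` for the empty partition
def largestPart (t : Fin k → ℕ) : ℕ :=
  univ.sup fun i => if t i = 0 then 0 else (i : ℕ) + 1

theorem lt_largestPart {t : Fin k → ℕ} {i : Fin k} (h : t i ≠ 0) : (i : ℕ) < largestPart t := by
  have := le_sup (f := fun i : Fin k => if t i = 0 then 0 else (i : ℕ) + 1) (mem_univ i)
  simp only [h, if_false] at this
  exact this

theorem eq_zero_of_largestPart_le {t : Fin k → ℕ} {i : Fin k} (h : largestPart t ≤ i) :
    t i = 0 := by
  by_contra hi
  exact (lt_largestPart hi).not_ge h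

theorem largestPart_le_weight (t : Fin k → ℕ) : largestPart t ≤ weight t := by
  refine Finset.sup_le fun i _ => ?_
  split_ifs with hi
  · exact Nat.zero_le _
  · exact (Nat.le_mul_of_pos_right _ (Nat.pos_of_ne_zero hi)).trans (le_weight t i)

theorem exists_succ_eq_largestPart {t : Fin k → ℕ} (ht : t ≠ 0) :
    ∃ i : Fin k, (i : ℕ) + 1 = largestPart t ∧ t i ≠ 0 := by
  obtain ⟨i₁, hi₁⟩ := Function.ne_iff.mp ht
  obtain ⟨i, -, hi⟩ := exists_mem_eq_sup univ ⟨i₁, mem_univ _⟩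
    fun i : Fin k => if t i = 0 then 0 else (i : ℕ) + 1
  have hpos := lt_largestPart hi₁
  rw [largestPart, hi] at hpos ⊢
  split_ifs at hpos ⊢ with h
  · omega
  · exact ⟨i, rfl, h⟩

theorem largestPart_eq {t : Fin k → ℕ} {j : Fin k} (hj : t j ≠ 0)
    (h : ∀ x : Fin k, j < x → t x = 0) : largestPart t = j + 1 := by
  refine le_antisymm (Finset.sup_le fun x _ => ?_) (lt_largestPart hj)
  split_ifs with hx
  · exact Nat.zero_le _
  · exact Nat.succ_le_succ (not_lt.mp fun hjx => hx (h x hjx))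

-- replaces one largest part `p` by a part `p + 1`
def raiseLargestPart (t : Fin k → ℕ) : Fin k → ℕ := fun x =>
  if (x : ℕ) + 1 = largestPart t then t x - 1 else if (x : ℕ) = largestPart t then 1 else t x

theorem exists_raiseLargestPart_eq {t : Fin k → ℕ} (ht : t ≠ 0) (hL : largestPart t < k) :
    ∃ (u : Fin k → ℕ) (i j : Fin k), (i : ℕ) + 1 = largestPart t ∧ (j : ℕ) = largestPart t ∧
      (∀ x, i < x → u x = 0) ∧ t = u + Pi.single i 1 ∧
      raiseLargestPart t = u + Pi.single j 1 := by
  obtain ⟨i, hi, hti⟩ := exists_succ_eq_largestPart ht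
  refine ⟨update t i (t i - 1), i, ⟨largestPart t, hL⟩, hi, rfl, fun x hx => ?_, ?_, ?_⟩
  · rw [update_of_ne hx.ne']
    exact eq_zero_of_largestPart_le (by rw [Fin.lt_def] at hx; omega)
  · ext x
    by_cases hx : x = i
    · subst hx
      simp only [Pi.add_apply, update_self, Pi.single_eq_same]
      omega
    · simp [hx]
  · ext x
    by_cases hxL : (x : ℕ) = largestPart t
    · obtain rfl : x = ⟨largestPart t, hL⟩ := Fin.ext hxL
      have hxi : (⟨largestPart t, hL⟩ : Fin k) ≠ i := fun h => by subst h; omega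
      simp [raiseLargestPart, update_of_ne hxi, eq_zero_of_largestPart_le hxL.ge]
    · have hne : x ≠ ⟨largestPart t, hL⟩ := fun h => hxL (congrArg Fin.val h)
      by_cases hxi : x = i
      · subst hxi
        simp [raiseLargestPart, hi, Pi.single_eq_of_ne hne]
      · have hx1 : (x : ℕ) + 1 ≠ largestPart t := fun h => hxi (Fin.ext (by omega))
        simp [raiseLargestPart, hxL, hxi, hne, hx1]

theorem weight_raiseLargestPart {t : Fin k → ℕ} (ht : t ≠ 0) (hL : largestPart t < k) :
    weight (raiseLargestPart t) = weight t + 1 := by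
  obtain ⟨u, i, j, hi, hj, -, rfl, hraise⟩ := exists_raiseLargestPart_eq ht hL
  rw [hraise, weight_add, weight_add, weight_single, weight_single]
  omega

theorem term_le_term_raiseLargestPart {lam : ℝ} (hlam : 0 ≤ lam) {t : Fin k → ℕ} (ht : t ≠ 0)
    (hL : largestPart t < k) : term lam t ≤ term lam (raiseLargestPart t) := by
  obtain ⟨u, i, j, hi, hj, hu, rfl, hraise⟩ := exists_raiseLargestPart_eq ht hL
  have huj : u j = 0 := hu j (by rw [Fin.lt_def]; omega)
  rw [hraise, term_add_single_one, term_add_single_one, huj, Nat.cast_zero, zero_add, div_one]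
  exact div_le_self (mul_nonneg hlam (term_nonneg hlam u)) (by simp)

theorem largestPart_raiseLargestPart {t : Fin k → ℕ} (ht : t ≠ 0) (hL : largestPart t < k) :
    largestPart (raiseLargestPart t) = largestPart t + 1 := by
  obtain ⟨u, i, j, hi, hj, hu, rfl, hraise⟩ := exists_raiseLargestPart_eq ht hL
  rw [hraise, ← hj]
  refine largestPart_eq (by simp) fun x hx => ?_
  rw [Pi.add_apply, hu x (by rw [Fin.lt_def] at hx ⊢; omega), Pi.single_eq_of_ne hx.ne', add_zero]

theorem raiseLargestPart_injOn :
    Set.InjOn raiseLargestPart {t : Fin k → ℕ | t ≠ 0 ∧ largestPart t < k} := by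
  rintro t ⟨ht, hL⟩ t' ⟨ht', hL'⟩ h
  have hLL : largestPart t = largestPart t' := by
    have := congrArg largestPart h
    rw [largestPart_raiseLargestPart ht hL, largestPart_raiseLargestPart ht' hL'] at this
    omega
  obtain ⟨u, i, j, hi, hj, -, rfl, hraise⟩ := exists_raiseLargestPart_eq ht hL
  obtain ⟨u', i', j', hi', hj', -, rfl, hraise'⟩ := exists_raiseLargestPart_eq ht' hL'
  obtain rfl : i = i' := Fin.ext (by omega)
  obtain rfl : j = j' := Fin.ext (by omega)
  rw [hraise, hraise'] at h
  rw [add_right_cancel h]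

theorem poissonOrderH_lt_succ {m : ℕ} {lam : ℝ} (hlam : 0 < lam) (hm : 1 ≤ m) (hmk : m < k) :
    poissonOrderH k m lam < poissonOrderH k (m + 1) lam := by
  have hA : ∀ t ∈ tuples k m, t ≠ 0 ∧ largestPart t < k := fun t ht => by
    rw [mem_tuples] at ht
    refine ⟨?_, (largestPart_le_weight t).trans_lt (ht ▸ hmk)⟩
    rintro rfl
    simp only [weight_zero] at ht
    omega
  have hsub : (tuples k m).image raiseLargestPart ⊆ tuples k (m + 1) := by
    intro s hs
    obtain ⟨t, ht, rfl⟩ := mem_image.mp hs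
    rw [mem_tuples, weight_raiseLargestPart (hA t ht).1 (hA t ht).2, mem_tuples.mp ht]
  -- a single part of size `m + 1` is not in the image, whose members have a part of size `≥ 2`
  set s₀ : Fin k → ℕ := Pi.single ⟨0, by omega⟩ (m + 1)
  have hs₀ : s₀ ∈ tuples k (m + 1) := by
    rw [mem_tuples, weight_single]
    simp
  have hs₀_notMem : s₀ ∉ (tuples k m).image raiseLargestPart := by
    intro hs
    obtain ⟨t, ht, hts⟩ := mem_image.mp hs
    have hL := largestPart_raiseLargestPart (hA t ht).1 (hA t ht).2
    rw [hts, largestPart_eq (j := ⟨0, by omega⟩) (by simp [s₀]) fun x hx => Pi.single_eq_of_ne hx.ne' _] at hL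
    obtain ⟨i, hi, -⟩ := exists_succ_eq_largestPart (hA t ht).1
    simp only at hL
    omega
  rw [poissonOrderH_eq_sum_tuples, poissonOrderH_eq_sum_tuples]
  calc ∑ t ∈ tuples k m, term lam t
      ≤ ∑ t ∈ tuples k m, term lam (raiseLargestPart t) :=
        sum_le_sum fun t ht => term_le_term_raiseLargestPart hlam.le (hA t ht).1 (hA t ht).2
    _ = ∑ s ∈ (tuples k m).image raiseLargestPart, term lam s :=
        (sum_image fun t ht t' ht' => raiseLargestPart_injOn (hA t ht) (hA t' ht')).symm
    _ < ∑ s ∈ tuples k (m + 1), term lam s :=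
        sum_lt_sum_of_subset hsub hs₀ hs₀_notMem (term_pos hlam s₀) fun s _ _ => term_nonneg hlam.le s

end PoissonOrder

theorem stmt_0_general (k : ℕ) (lam : ℝ) (hlam : 0 < lam)
    (n : ℕ) (hn1 : 2 ≤ n) (hn2 : n ≤ k) :
    poissonOrderH k (n - 1) lam < poissonOrderH k n lam := by
  obtain ⟨m, rfl⟩ : ∃ m, n = m + 1 := ⟨n - 1, by omega⟩
  exact PoissonOrder.poissonOrderH_lt_succ hlam (by omega) (by omega)

theorem stmt_0 (k : ℕ) (hk : 2 ≤ k) (lam : ℝ) (hlam : 0 < lam)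
    (n : ℕ) (hn1 : 2 ≤ n) (hn2 : n ≤ k) :
    poissonOrderH k (n - 1) lam < poissonOrderH k n lam :=
  stmt_0_general k lam hlam n hn1 hn2
end

section
/- For every integer k ≥ 2 and every real λ > 0 such that h_k(k;λ) ≤ 1, one has h_k(k;λ) > h_k(k+1;λ). -/
/-!
Write `h(n) = h_k(n;λ)`. Removing one part of size `j` from the partitions of `n` into parts of size
at most `k` gives `∑_t t_j w(t) = λ h(n - j)`, hence the recurrence
`n h(n) = λ ∑_{n-k ≤ i < n} (n - i) h(i)`. For `1 ≤ m < k` it yields `h(m) ≤ λ ∑_{i<m} h(i)` and then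
`h(m) ≤ h(m+1)`, so `h(k) ≤ 1` forces `h(i) ≤ 1` for all `i ≤ k`. Comparing the recurrence at `k`
and `k + 1` gives `(k+1) h(k+1) = k h(k) + λ (∑_{i ≤ k} h(i) - (k+1)) ≤ k h(k) + λ (h(k) - 1)`,
which is less than `(k+1) h(k)`.
-/

open Finset
open scoped Nat

namespace PoissonOrder

variable {k : ℕ}

-- `t i` is the multiplicity of the part size `i + 1`.
def multiplicityTuples (k n : ℕ) : Finset (Fin k → ℕ) :=
  (Fintype.piFinset fun _ : Fin k => range (n + 1)).filter
    (fun t => ∑ i : Fin k, ((i : ℕ) + 1) * t i = n)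

noncomputable def tupleWeight (lam : ℝ) (t : Fin k → ℕ) : ℝ :=
  lam ^ (∑ i, t i) / ∏ i, ((t i)! : ℝ)

theorem poissonOrderH_eq_sum (n : ℕ) (lam : ℝ) :
    poissonOrderH k n lam = ∑ t ∈ multiplicityTuples k n, tupleWeight lam t := rfl

theorem mul_apply_le_of_sum_eq {n : ℕ} {t : Fin k → ℕ}
    (ht : ∑ j : Fin k, ((j : ℕ) + 1) * t j = n) (i : Fin k) : ((i : ℕ) + 1) * t i ≤ n :=
  ht ▸ single_le_sum (f := fun j : Fin k => ((j : ℕ) + 1) * t j)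
    (fun _ _ => Nat.zero_le _) (mem_univ i)

theorem mem_multiplicityTuples {n : ℕ} {t : Fin k → ℕ} :
    t ∈ multiplicityTuples k n ↔ ∑ i : Fin k, ((i : ℕ) + 1) * t i = n := by
  refine ⟨fun ht => (mem_filter.mp ht).2, fun ht => mem_filter.mpr ⟨?_, ht⟩⟩
  refine Fintype.mem_piFinset.mpr fun i => mem_range_succ_iff.mpr ?_
  exact (Nat.le_mul_of_pos_left _ i.succ_pos).trans (mul_apply_le_of_sum_eq ht i)

theorem tupleWeight_pos {lam : ℝ} (hlam : 0 < lam) (t : Fin k → ℕ) : 0 < tupleWeight lam t := by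
  unfold tupleWeight; positivity

theorem tupleWeight_nonneg {lam : ℝ} (hlam : 0 ≤ lam) (t : Fin k → ℕ) : 0 ≤ tupleWeight lam t := by
  unfold tupleWeight; positivity

theorem prod_factorial_add_single (s : Fin k → ℕ) (p : Fin k) :
    ∏ j, ((s + Pi.single p 1 : Fin k → ℕ) j)! = (s p + 1) * ∏ j, (s j)! := by
  have hcompl : ∏ j ∈ {p}ᶜ, ((s + Pi.single p 1 : Fin k → ℕ) j)! = ∏ j ∈ {p}ᶜ, (s j)! :=
    prod_congr rfl fun j hj => by simp [Pi.single_eq_of_ne (by simpa using hj : j ≠ p)]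
  rw [Fintype.prod_eq_mul_prod_compl p, Fintype.prod_eq_mul_prod_compl p (fun j => (s j)!),
    hcompl]
  simp [Nat.factorial_succ, mul_assoc]

theorem tupleWeight_add_single (lam : ℝ) (s : Fin k → ℕ) (p : Fin k) :
    (s p + 1 : ℝ) * tupleWeight lam (s + Pi.single p 1 : Fin k → ℕ) = lam * tupleWeight lam s := by
  have hsum : ∑ j, (s + Pi.single p 1 : Fin k → ℕ) j = ∑ j, s j + 1 := by simp [sum_add_distrib]
  have hprod : ∏ j, (((s + Pi.single p 1 : Fin k → ℕ) j)! : ℝ) = (s p + 1) * ∏ j, ((s j)! : ℝ) := by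
    exact_mod_cast prod_factorial_add_single s p
  unfold tupleWeight
  rw [hsum, pow_succ, hprod]
  field_simp

theorem sum_mul_add_single (c s : Fin k → ℕ) (p : Fin k) :
    ∑ j, c j * (s + Pi.single p 1 : Fin k → ℕ) j = ∑ j, c j * s j + c p := by
  simp [mul_add, sum_add_distrib, Pi.single_apply]

theorem sub_single_add_single {t : Fin k → ℕ} {p : Fin k} (hp : t p ≠ 0) :
    t - Pi.single p 1 + Pi.single p 1 = t := by
  funext j
  rcases eq_or_ne j p with rfl | hj
  · simp; omega
  · simp [hj]

theorem sum_apply_mul_tupleWeight (lam : ℝ) (m : ℕ) (p : Fin k) :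
    ∑ t ∈ multiplicityTuples k (m + (p + 1)), (t p : ℝ) * tupleWeight lam t =
      lam * poissonOrderH k m lam := by
  rw [← sum_filter_of_ne (p := fun t => t p ≠ 0) fun t _ ht h0 => ht (by simp [h0]),
    poissonOrderH_eq_sum, mul_sum]
  symm
  refine sum_nbij' (· + Pi.single p 1) (· - Pi.single p 1) (fun s hs => ?_) (fun t ht => ?_)
    (fun s _ => add_tsub_cancel_right s _) (fun t ht => sub_single_add_single (mem_filter.mp ht).2)
    (fun s _ => ?_)
  · simp only [mem_filter, mem_multiplicityTuples] at hs ⊢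
    rw [sum_mul_add_single (fun j : Fin k => (j : ℕ) + 1), hs]
    simp
  · obtain ⟨ht, hp⟩ := mem_filter.mp ht
    rw [mem_multiplicityTuples] at ht ⊢
    rw [← sub_single_add_single hp, sum_mul_add_single (fun j : Fin k => (j : ℕ) + 1)] at ht
    omega
  · rw [← tupleWeight_add_single lam s p]
    simp

theorem sum_apply_mul_tupleWeight_of_lt (lam : ℝ) {n : ℕ} {p : Fin k} (hn : n < p + 1) :
    ∑ t ∈ multiplicityTuples k n, (t p : ℝ) * tupleWeight lam t = 0 := by
  refine sum_eq_zero fun t ht => ?_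
  have hle := mul_apply_le_of_sum_eq (mem_multiplicityTuples.mp ht) p
  have : t p = 0 := Nat.eq_zero_of_not_pos fun h => by
    have := Nat.le_mul_of_pos_right ((p : ℕ) + 1) h
    omega
  simp [this]

-- `i = n - j` for the part sizes `1 ≤ j ≤ min k n`; the truncation of `n - k` is intended.
theorem poissonOrderH_recurrence (lam : ℝ) (n : ℕ) :
    (n : ℝ) * poissonOrderH k n lam =
      lam * ∑ i ∈ Ico (n - k) n, ((n : ℝ) - i) * poissonOrderH k i lam := by
  have hpart (p : Fin k) : ∑ t ∈ multiplicityTuples k n, (t p : ℝ) * tupleWeight lam t =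
      if (p : ℕ) + 1 ≤ n then lam * poissonOrderH k (n - (p + 1)) lam else 0 := by
    split_ifs with hp
    · obtain ⟨m, rfl⟩ := Nat.exists_eq_add_of_le' hp
      simpa using sum_apply_mul_tupleWeight lam m p
    · exact sum_apply_mul_tupleWeight_of_lt lam (by omega)
  calc (n : ℝ) * poissonOrderH k n lam
      = ∑ t ∈ multiplicityTuples k n, ∑ p : Fin k, ((p : ℝ) + 1) * (t p * tupleWeight lam t) := by
        rw [poissonOrderH_eq_sum, mul_sum]
        refine sum_congr rfl fun t ht => ?_
        simp_rw [← mul_assoc, ← sum_mul]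
        rw [← mem_multiplicityTuples.mp ht]
        push_cast
        rfl
    _ = ∑ p : Fin k, if (p : ℕ) + 1 ≤ n then
          ((p : ℝ) + 1) * (lam * poissonOrderH k (n - (p + 1)) lam) else 0 := by
        rw [sum_comm]
        simp_rw [← mul_sum, hpart, mul_ite, mul_zero]
    _ = _ := by
        rw [← sum_filter, mul_sum]
        refine sum_bij' (fun p _ => n - (p + 1)) (fun i hi => ⟨n - 1 - i, by simp at hi; omega⟩)
          (fun p hp => ?_) (fun i hi => ?_) (fun p hp => ?_) (fun i hi => ?_) (fun p hp => ?_)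
        · simp only [mem_filter, mem_univ, true_and, mem_Ico] at hp ⊢; omega
        · simp only [mem_filter, mem_univ, true_and, mem_Ico] at hi ⊢; omega
        · simp only [mem_filter, mem_univ, true_and] at hp; ext; simp; omega
        · simp only [mem_Ico] at hi; simp; omega
        · simp only [mem_filter, mem_univ, true_and] at hp
          rw [Nat.cast_sub (by omega)]
          push_cast
          ring

theorem poissonOrderH_recurrence_of_le (lam : ℝ) {n : ℕ} (hn : n ≤ k) :
    (n : ℝ) * poissonOrderH k n lam =
      lam * ∑ i ∈ range n, ((n : ℝ) - i) * poissonOrderH k i lam := by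
  rw [poissonOrderH_recurrence, Nat.sub_eq_zero_of_le hn, range_eq_Ico]

theorem poissonOrderH_zero (lam : ℝ) : poissonOrderH k 0 lam = 1 := by
  have h0 : multiplicityTuples k 0 = {0} := by
    ext t
    simp [mem_multiplicityTuples, sum_eq_zero_iff, funext_iff]
  simp [poissonOrderH_eq_sum, h0, tupleWeight]

theorem poissonOrderH_nonneg {lam : ℝ} (hlam : 0 ≤ lam) (n : ℕ) : 0 ≤ poissonOrderH k n lam :=
  sum_nonneg fun t _ => tupleWeight_nonneg hlam t

theorem poissonOrderH_pos {lam : ℝ} (hlam : 0 < lam) (hk : 0 < k) (n : ℕ) :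
    0 < poissonOrderH k n lam := by
  rw [poissonOrderH_eq_sum]
  refine sum_pos (fun t _ => tupleWeight_pos hlam t) ⟨Pi.single ⟨0, hk⟩ n, ?_⟩
  simp [mem_multiplicityTuples, Pi.single_apply]

theorem sum_range_succ_sub_mul (f : ℕ → ℝ) (m : ℕ) :
    ∑ i ∈ range (m + 1), ((m : ℝ) + 1 - i) * f i =
      ∑ i ∈ range m, ((m : ℝ) - i) * f i + ∑ i ∈ range (m + 1), f i := by
  simp_rw [add_sub_right_comm, add_mul, one_mul, sum_add_distrib,
    sum_range_succ (fun i => ((m : ℝ) - i) * f i), sub_self, zero_mul, add_zero]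

theorem poissonOrderH_le_succ {lam : ℝ} (hlam : 0 ≤ lam) {m : ℕ} (hm : 0 < m) (hmk : m < k) :
    poissonOrderH k m lam ≤ poissonOrderH k (m + 1) lam := by
  have hrec := poissonOrderH_recurrence_of_le lam hmk.le
  have hrec_succ := poissonOrderH_recurrence_of_le lam (Nat.succ_le_of_lt hmk)
  push_cast at hrec_succ
  rw [sum_range_succ_sub_mul, mul_add, ← hrec, sum_range_succ] at hrec_succ
  have hweights : ∑ i ∈ range m, ((m : ℝ) - i) * poissonOrderH k i lam ≤
      m * ∑ i ∈ range m, poissonOrderH k i lam := by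
    rw [mul_sum]
    exact sum_le_sum fun i _ => mul_le_mul_of_nonneg_right (by simp)
      (poissonOrderH_nonneg hlam i)
  have hle : poissonOrderH k m lam ≤ lam * ∑ i ∈ range m, poissonOrderH k i lam := by
    have hm' : (0 : ℝ) < m := Nat.cast_pos.mpr hm
    refine le_of_mul_le_mul_left ?_ hm'
    calc (m : ℝ) * poissonOrderH k m lam
        ≤ lam * (m * ∑ i ∈ range m, poissonOrderH k i lam) := by
          rw [hrec]; exact mul_le_mul_of_nonneg_left hweights hlam
      _ = m * (lam * ∑ i ∈ range m, poissonOrderH k i lam) := by ring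
  have hm1 : (0 : ℝ) < m + 1 := by positivity
  refine le_of_mul_le_mul_left ?_ hm1
  linarith [mul_nonneg hlam (poissonOrderH_nonneg (k := k) hlam m)]

theorem poissonOrderH_le_of_le {lam : ℝ} (hlam : 0 ≤ lam) {m n : ℕ} (hm : 0 < m) (hmn : m ≤ n)
    (hnk : n ≤ k) : poissonOrderH k m lam ≤ poissonOrderH k n lam := by
  induction n, hmn using Nat.le_induction with
  | base => exact le_rfl
  | succ n hmn ih => exact (ih (by omega)).trans (poissonOrderH_le_succ hlam (by omega) hnk)

theorem poissonOrderH_le_one {lam : ℝ} (hlam : 0 ≤ lam) (h1 : poissonOrderH k k lam ≤ 1) {i : ℕ}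
    (hi : i ≤ k) : poissonOrderH k i lam ≤ 1 := by
  rcases Nat.eq_zero_or_pos i with rfl | hi0
  · exact (poissonOrderH_zero lam).le
  · exact (poissonOrderH_le_of_le hlam hi0 hi le_rfl).trans h1

theorem succ_mul_poissonOrderH_succ_self (lam : ℝ) :
    ((k : ℝ) + 1) * poissonOrderH k (k + 1) lam =
      k * poissonOrderH k k lam +
        lam * (∑ i ∈ range (k + 1), poissonOrderH k i lam - (k + 1)) := by
  have hsum := sum_range_succ_sub_mul (fun i => poissonOrderH k i lam) k
  rw [sum_range_eq_add_Ico _ k.succ_pos, Nat.cast_zero, sub_zero, poissonOrderH_zero] at hsum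
  rw [poissonOrderH_recurrence_of_le lam le_rfl]
  have hrec := poissonOrderH_recurrence (k := k) lam (k + 1)
  rw [Nat.add_sub_cancel_left] at hrec
  push_cast at hrec
  rw [hrec]
  linear_combination lam * hsum

end PoissonOrder

open PoissonOrder

theorem stmt_2 (k : ℕ) (hk : 2 ≤ k) (lam : ℝ) (hlam : 0 < lam)
    (h1 : poissonOrderH k k lam ≤ 1) :
    poissonOrderH k (k + 1) lam < poissonOrderH k k lam := by
  have hpos : 0 < poissonOrderH k k lam := poissonOrderH_pos hlam (by omega) k
  have hsum : ∑ i ∈ range k, poissonOrderH k i lam ≤ k := by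
    simpa using sum_le_card_nsmul (range k) _ 1 fun i hi =>
      poissonOrderH_le_one hlam.le h1 (mem_range.mp hi).le
  have hid := succ_mul_poissonOrderH_succ_self (k := k) lam
  rw [sum_range_succ] at hid
  have hk' : (0 : ℝ) < k + 1 := by positivity
  refine lt_of_mul_lt_mul_left ?_ hk'.le
  linarith [mul_le_mul_of_nonneg_left hsum hlam.le, mul_nonneg hlam.le (sub_nonneg.mpr h1)]
end

section
/- Let k ≥ 2 be an integer, λ > 0 a real number, and m ≥ 1 an integer such that both 0 and m are modes of the Poisson distribution of order k with parameter λ, and let r > 0 be a real number with h_k(k;r) = 1. Then 2/(k+1) ≤ λ ≤ r < 1. -/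
/-- `m` is a mode of the Poisson distribution of order `k` with parameter `lam`. -/
def IsMode (k : ℕ) (lam : ℝ) (m : ℕ) : Prop :=
  ∀ n : ℕ, poissonOrderPmf k n lam ≤ poissonOrderPmf k m lam

/-!
Mode `0` means `h_k(n;λ) ≤ h_k(0;λ) = 1` for all `n`, and then the mode `m` has `h_k(m;λ) = 1`.
Since `h_k(k;·)` is strictly increasing on `[0, ∞)` and `h_k(k;1) > 1` (the partitions
`k = k` and `k = 1 + ⋯ + 1` alone contribute `1 + 1/k!`), the root `r` satisfies `λ ≤ r < 1`.
For the lower bound, removing one part of size `i` from a partition of `n` gives the recurrence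
`n h_k(n) = λ ∑_{i ≤ min(k,n)} i h_k(n-i)`; at `n = m` every `h`-value is at most `1`, so
`m ≤ λ j(j+1)/2 ≤ λ m(k+1)/2` with `j = min(k,m)`.
-/

open Finset

/-- Multiplicity vectors of the partitions of `n` into parts of size at most `k`:
`t i` is the multiplicity of the part `i + 1`. -/
def partitionMults (k n : ℕ) : Finset (Fin k → ℕ) :=
  (Fintype.piFinset fun _ : Fin k => range (n + 1)) |>.filter
    (fun t => ∑ i : Fin k, ((i : ℕ) + 1) * t i = n)

noncomputable def monomialWeight {k : ℕ} (lam : ℝ) (t : Fin k → ℕ) : ℝ :=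
  lam ^ (∑ i, t i) / ∏ i, ((t i).factorial : ℝ)

theorem poissonOrderH_eq_sum (k n : ℕ) (lam : ℝ) :
    poissonOrderH k n lam = ∑ t ∈ partitionMults k n, monomialWeight lam t :=
  rfl

theorem mem_partitionMults {k n : ℕ} {t : Fin k → ℕ} :
    t ∈ partitionMults k n ↔ ∑ i : Fin k, ((i : ℕ) + 1) * t i = n := by
  refine ⟨fun h => (mem_filter.mp h).2, fun h => mem_filter.mpr ⟨?_, h⟩⟩
  refine Fintype.mem_piFinset.mpr fun j => mem_range_succ_iff.mpr ?_
  calc t j ≤ ((j : ℕ) + 1) * t j := Nat.le_mul_of_pos_left _ j.val.succ_pos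
    _ ≤ ∑ i : Fin k, ((i : ℕ) + 1) * t i :=
      single_le_sum (f := fun i : Fin k => ((i : ℕ) + 1) * t i) (fun _ _ => Nat.zero_le _)
        (mem_univ j)
    _ = n := h

theorem single_mem_partitionMults {k n c : ℕ} {i : Fin k} (h : ((i : ℕ) + 1) * c = n) :
    Pi.single i c ∈ partitionMults k n := by
  simpa [mem_partitionMults, Pi.single_apply] using h

theorem coord_eq_zero_of_mem_partitionMults {k n : ℕ} {t : Fin k → ℕ}
    (ht : t ∈ partitionMults k n) {i : Fin k} (hn : n < (i : ℕ) + 1) : t i = 0 := by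
  by_contra hti
  have : ((i : ℕ) + 1) * t i ≤ n := mem_partitionMults.mp ht ▸
    single_le_sum (f := fun j : Fin k => ((j : ℕ) + 1) * t j) (fun _ _ => Nat.zero_le _)
      (mem_univ i)
  nlinarith [Nat.one_le_iff_ne_zero.mpr hti]

theorem poissonOrderH_zero (k : ℕ) (lam : ℝ) : poissonOrderH k 0 lam = 1 := by
  have : partitionMults k 0 = {0} := by
    ext t
    simp [mem_partitionMults, funext_iff]
  simp [poissonOrderH_eq_sum, this, monomialWeight]

theorem monomialWeight_nonneg {k : ℕ} {lam : ℝ} (hlam : 0 ≤ lam) (t : Fin k → ℕ) :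
    0 ≤ monomialWeight lam t := by
  unfold monomialWeight; positivity

theorem monomialWeight_monotoneOn {k : ℕ} (t : Fin k → ℕ) :
    MonotoneOn (monomialWeight · t) (Set.Ici 0) := fun _ ha _ _ hab =>
  div_le_div_of_nonneg_right (pow_le_pow_left₀ ha hab _) (by positivity)

theorem monomialWeight_strictMonoOn {k : ℕ} {t : Fin k → ℕ} (ht : ∑ i, t i ≠ 0) :
    StrictMonoOn (monomialWeight · t) (Set.Ici 0) := fun _ ha _ _ hab =>
  div_lt_div_of_pos_right (pow_lt_pow_left₀ hab ha ht) (by positivity)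

theorem poissonOrderH_strictMonoOn {k n : ℕ} (hk : 0 < k) (hn : 0 < n) :
    StrictMonoOn (poissonOrderH k n) (Set.Ici 0) := by
  intro a ha b hb hab
  simp only [poissonOrderH_eq_sum]
  refine sum_lt_sum (fun t _ => monomialWeight_monotoneOn t ha hb hab.le)
    ⟨Pi.single ⟨0, hk⟩ n, single_mem_partitionMults (by simp), ?_⟩
  exact monomialWeight_strictMonoOn (by simpa using hn.ne') ha hb hab

theorem one_lt_poissonOrderH_self_one {k : ℕ} (hk : 2 ≤ k) : 1 < poissonOrderH k k 1 := by
  set long : Fin k → ℕ := Pi.single ⟨0, by omega⟩ k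
  set short : Fin k → ℕ := Pi.single ⟨k - 1, by omega⟩ 1
  have hne : long ≠ short := fun h => by
    have := congrFun h ⟨0, by omega⟩
    simp only [long, short, Pi.single_apply, Fin.ext_iff] at this
    split_ifs at this <;> omega
  have hpair : {long, short} ⊆ partitionMults k k := by
    simp only [insert_subset_iff, singleton_subset_iff]
    exact ⟨single_mem_partitionMults (by simp), single_mem_partitionMults (by simp; omega)⟩
  have hshort : monomialWeight 1 short = 1 := by
    simp [monomialWeight, short, Pi.single_apply, apply_ite Nat.factorial]
  have hlong : 0 < monomialWeight 1 long := by
    unfold monomialWeight; positivity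
  calc 1 < monomialWeight 1 long + monomialWeight 1 short := by linarith
    _ = ∑ t ∈ {long, short}, monomialWeight 1 t := (sum_pair hne).symm
    _ ≤ poissonOrderH k k 1 :=
      sum_le_sum_of_subset_of_nonneg hpair fun t _ _ => monomialWeight_nonneg zero_le_one t

theorem sum_mul_add_single {k : ℕ} (c u : Fin k → ℕ) (i : Fin k) :
    ∑ j, c j * (u + Pi.single i 1 : Fin k → ℕ) j = ∑ j, c j * u j + c i := by
  simp [mul_add, sum_add_distrib, Pi.single_apply]

theorem add_single_mem_partitionMults_iff {k n : ℕ} {u : Fin k → ℕ} {i : Fin k} :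
    u + Pi.single i 1 ∈ partitionMults k (n + ((i : ℕ) + 1)) ↔ u ∈ partitionMults k n := by
  simp only [mem_partitionMults, sum_mul_add_single]
  omega

theorem monomialWeight_add_single {k : ℕ} (lam : ℝ) (u : Fin k → ℕ) (i : Fin k) :
    ((u + Pi.single i 1 : Fin k → ℕ) i : ℝ) * monomialWeight lam (u + Pi.single i 1) =
      lam * monomialWeight lam u := by
  classical
  have hsum : ∑ j, (u + Pi.single i 1 : Fin k → ℕ) j = ∑ j, u j + 1 := by
    simpa using sum_mul_add_single 1 u i
  have hprod : ∏ j, ((u + Pi.single i 1 : Fin k → ℕ) j).factorial =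
      (u i + 1) * ∏ j, (u j).factorial := by
    have hoff : ∀ j ∈ ({i}ᶜ : Finset (Fin k)),
        ((u + Pi.single i 1 : Fin k → ℕ) j).factorial = (u j).factorial := fun j hj => by
      rw [mem_compl, mem_singleton] at hj
      simp [hj]
    rw [Fintype.prod_eq_mul_prod_compl i,
      Fintype.prod_eq_mul_prod_compl i (fun j => (u j).factorial), prod_congr rfl hoff]
    simp [Nat.factorial_succ, mul_assoc]
  have hprod' : ∏ j, (((u + Pi.single i 1 : Fin k → ℕ) j).factorial : ℝ) =
      (u i + 1) * ∏ j, ((u j).factorial : ℝ) := by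
    exact_mod_cast hprod
  rw [monomialWeight, monomialWeight, hsum, hprod', Pi.add_apply, Pi.single_eq_same]
  field_simp
  push_cast
  ring

theorem sum_coord_mul_monomialWeight_add (k n : ℕ) (lam : ℝ) (i : Fin k) :
    ∑ t ∈ partitionMults k (n + ((i : ℕ) + 1)), (t i : ℝ) * monomialWeight lam t =
      lam * poissonOrderH k n lam := by
  classical
  set bump : (Fin k → ℕ) → (Fin k → ℕ) := (· + Pi.single i 1)
  have himage : (partitionMults k n).image bump ⊆ partitionMults k (n + ((i : ℕ) + 1)) := by
    simp only [image_subset_iff]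
    exact fun u hu => add_single_mem_partitionMults_iff.mpr hu
  -- every tuple with `t i ≠ 0` is a bumped one, namely of `t - Pi.single i 1`
  have hrest : ∀ t ∈ partitionMults k (n + ((i : ℕ) + 1)),
      t ∉ (partitionMults k n).image bump → (t i : ℝ) * monomialWeight lam t = 0 := by
    intro t ht hnot
    suffices t i = 0 by simp [this]
    by_contra hti
    have hbump : bump (t - Pi.single i 1) = t := by
      funext j
      by_cases hj : j = i
      · subst hj; simp [bump]; omega
      · simp [bump, hj]
    rw [← hbump, add_single_mem_partitionMults_iff] at ht
    exact hnot (hbump ▸ mem_image_of_mem bump ht)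
  rw [← sum_subset himage hrest, sum_image fun _ _ _ _ h => add_left_injective _ h,
    poissonOrderH_eq_sum, mul_sum]
  exact sum_congr rfl fun u _ => monomialWeight_add_single lam u i

theorem sum_coord_mul_monomialWeight (k n : ℕ) (lam : ℝ) (i : Fin k) :
    ∑ t ∈ partitionMults k n, (t i : ℝ) * monomialWeight lam t =
      if (i : ℕ) + 1 ≤ n then lam * poissonOrderH k (n - ((i : ℕ) + 1)) lam else 0 := by
  split_ifs with hin
  · obtain ⟨n, rfl⟩ := Nat.exists_eq_add_of_le' hin
    rw [Nat.add_sub_cancel, sum_coord_mul_monomialWeight_add]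
  · exact sum_eq_zero fun t ht => by simp [coord_eq_zero_of_mem_partitionMults ht (not_le.mp hin)]

theorem poissonOrderH_recurrence (k n : ℕ) (lam : ℝ) :
    n * poissonOrderH k n lam =
      lam * ∑ i ∈ range (min k n), ((i : ℝ) + 1) * poissonOrderH k (n - (i + 1)) lam := by
  have hn : ∀ t ∈ partitionMults k n, (n : ℝ) * monomialWeight lam t =
      ∑ i : Fin k, ((i : ℝ) + 1) * ((t i : ℝ) * monomialWeight lam t) := fun t ht => by
    rw [← mem_partitionMults.mp ht, Nat.cast_sum, sum_mul]
    push_cast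
    exact sum_congr rfl fun _ _ => mul_assoc _ _ _
  calc (n : ℝ) * poissonOrderH k n lam
      = ∑ i : Fin k, ((i : ℝ) + 1) *
          ∑ t ∈ partitionMults k n, (t i : ℝ) * monomialWeight lam t := by
        rw [poissonOrderH_eq_sum, mul_sum, sum_congr rfl hn, sum_comm]
        simp only [mul_sum]
    _ = ∑ i ∈ range k, ((i : ℝ) + 1) *
          if i + 1 ≤ n then lam * poissonOrderH k (n - (i + 1)) lam else 0 := by
        simp only [sum_coord_mul_monomialWeight]
        exact Fin.sum_univ_eq_sum_range (fun i => ((i : ℝ) + 1) *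
          if i + 1 ≤ n then lam * poissonOrderH k (n - (i + 1)) lam else 0) k
    _ = _ := by
        have hrange : (range k).filter (· + 1 ≤ n) = range (min k n) := by
          ext i; simp
        simp only [mul_ite, mul_zero, ← sum_filter, hrange, mul_sum]
        exact sum_congr rfl fun _ _ => by ring

theorem sum_range_add_one_mul_two (j : ℕ) :
    (∑ i ∈ range j, ((i : ℝ) + 1)) * 2 = j * (j + 1) := by
  have h := sum_range_id_mul_two (j + 1)
  rw [sum_range_succ', Nat.add_sub_cancel] at h
  exact_mod_cast h.trans (mul_comm _ _)

theorem IsMode.poissonOrderH_eq {k m m' : ℕ} {lam : ℝ} (hm : IsMode k lam m)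
    (hm' : IsMode k lam m') : poissonOrderH k m lam = poissonOrderH k m' lam :=
  mul_left_cancel₀ (Real.exp_pos _).ne' (le_antisymm (hm' m) (hm m'))

theorem isMode_zero_iff {k : ℕ} {lam : ℝ} :
    IsMode k lam 0 ↔ ∀ n, poissonOrderH k n lam ≤ 1 := by
  simp only [IsMode, poissonOrderPmf, poissonOrderH_zero, mul_one]
  exact forall_congr' fun n => mul_le_iff_le_one_right (Real.exp_pos _)

theorem two_le_mul_of_poissonOrderH_eq_one {k m : ℕ} {lam : ℝ} (hlam : 0 ≤ lam)
    (hle : ∀ n, poissonOrderH k n lam ≤ 1) (hm : 0 < m) (hHm : poissonOrderH k m lam = 1) :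
    2 ≤ lam * (k + 1) := by
  have hrec := poissonOrderH_recurrence k m lam
  rw [hHm, mul_one] at hrec
  have hbound : (m : ℝ) ≤ lam * ∑ i ∈ range (min k m), ((i : ℝ) + 1) :=
    hrec ▸ mul_le_mul_of_nonneg_left
      (sum_le_sum fun i _ => mul_le_of_le_one_right (by positivity) (hle _)) hlam
  have hgauss : ((min k m : ℕ) : ℝ) * ((min k m : ℕ) + 1) ≤ m * (k + 1) := by
    exact_mod_cast Nat.mul_le_mul (min_le_right k m) (Nat.succ_le_succ (min_le_left k m))
  have hmpos : (0 : ℝ) < m := by exact_mod_cast hm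
  nlinarith [sum_range_add_one_mul_two (min k m)]

theorem stmt_7 (k : ℕ) (hk : 2 ≤ k) (lam : ℝ) (hlam : 0 < lam)
    (m : ℕ) (hm : 1 ≤ m) (h0 : IsMode k lam 0) (hmm : IsMode k lam m)
    (r : ℝ) (hr : 0 < r) (hroot : poissonOrderH k k r = 1) :
    2 / ((k : ℝ) + 1) ≤ lam ∧ lam ≤ r ∧ r < 1 := by
  have hle : ∀ n, poissonOrderH k n lam ≤ 1 := isMode_zero_iff.mp h0
  have hHm : poissonOrderH k m lam = 1 := by rw [hmm.poissonOrderH_eq h0, poissonOrderH_zero]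
  have hmono : StrictMonoOn (poissonOrderH k k) (Set.Ici 0) :=
    poissonOrderH_strictMonoOn (by omega) (by omega)
  refine ⟨?_, ?_, ?_⟩
  · rw [div_le_iff₀ (by positivity)]
    exact two_le_mul_of_poissonOrderH_eq_one hlam.le hle hm hHm
  · exact (hmono.le_iff_le hlam.le hr.le).mp (hroot ▸ hle k)
  · exact (hmono.lt_iff_lt hr.le (Set.mem_Ici.mpr zero_le_one)).mp
      (hroot ▸ one_lt_poissonOrderH_self_one hk)
end

section
/- For every integer k ≥ 1 and every real λ > 0, the mean of the Poisson distribution of order k with parameter λ equals κλ: the series Σ_{n=0}^{∞} n·f_k(n;λ) converges and its sum is k(k+1)λ/2. -/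
/-! Write `t = (n₁, …, n_k)` and `w(t) = ∏ᵢ λ^{nᵢ}/nᵢ!`, so that `f_k(n; λ)` is `e^{-kλ}` times the
sum of `w` over the finite fiber `n₁ + 2n₂ + ⋯ + k n_k = n`. Summing `n f_k(n; λ)` fiber by fiber
turns it into `e^{-kλ} Σ_t (Σᵢ i nᵢ) w(t)`, a sum over all of `ℕ^k` that converges absolutely
because `w` is a product of exponential series. For each `i` that product gives `Σ_t nᵢ w(t) = λ e^{kλ}`,
so the mean is `e^{-kλ} (1 + 2 + ⋯ + k) λ e^{kλ} = κλ`. -/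

open Finset
open scoped Nat

section

variable {R : Type*} [NormedCommRing R] {β : Type*}

theorem summable_norm_pi_prod {m : ℕ} {a : Fin m → β → R} (hs : ∀ j, Summable fun x => ‖a j x‖) :
    Summable fun t : Fin m → β => ‖∏ j, a j (t j)‖ := by
  induction m with
  | zero => exact .of_finite
  | succ m ih =>
    have hmul := (hs 0).mul_norm (ih fun j => hs j.succ)
    rw [← (Fin.consEquiv fun _ => β).summable_iff]
    refine hmul.congr fun p => ?_
    simp [Fin.prod_univ_succ]

theorem hasSum_pi_prod [CompleteSpace R] {m : ℕ} {a : Fin m → β → R} {b : Fin m → R}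
    (hs : ∀ j, Summable fun x => ‖a j x‖) (h : ∀ j, HasSum (a j) (b j)) :
    HasSum (fun t : Fin m → β => ∏ j, a j (t j)) (∏ j, b j) := by
  induction m with
  | zero => simp
  | succ m ih =>
    have htail : HasSum (fun t : Fin m → β => ∏ j, a j.succ (t j)) (∏ j : Fin m, b j.succ) :=
      ih (fun j => hs j.succ) (fun j => h j.succ)
    have htail_norm : Summable fun t : Fin m → β => ‖∏ j : Fin m, a j.succ (t j)‖ :=
      summable_norm_pi_prod fun j => hs j.succ
    have hprod := summable_mul_of_summable_norm (hs 0) htail_norm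
    have hmul := (h 0).mul htail hprod
    rw [Fin.prod_univ_succ, ← (Fin.consEquiv fun _ => β).hasSum_iff]
    refine hmul.congr_fun fun p => ?_
    simp [Fin.prod_univ_succ]

end

theorem Real.hasSum_pow_div_factorial (x : ℝ) : HasSum (fun n => x ^ n / n !) (Real.exp x) :=
  Real.exp_eq_exp_ℝ ▸ NormedSpace.expSeries_div_hasSum_exp x

theorem Real.hasSum_nat_mul_pow_div_factorial (x : ℝ) :
    HasSum (fun n => n * x ^ n / n !) (x * Real.exp x) := by
  rw [← hasSum_nat_add_iff' 1, sum_range_one, Nat.cast_zero, zero_mul, zero_div, sub_zero]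
  refine ((Real.hasSum_pow_div_factorial x).mul_left x).congr_fun fun n => ?_
  rw [Nat.factorial_succ, pow_succ]
  push_cast
  field_simp

theorem Fin.sum_univ_cast_add_one (k : ℕ) : ∑ i : Fin k, ((i : ℝ) + 1) = k * (k + 1) / 2 := by
  induction k with
  | zero => simp
  | succ k ih =>
    rw [Fin.sum_univ_castSucc]
    simp only [Fin.val_castSucc, ih, Fin.val_last]
    push_cast
    ring

/-- `n₁ + 2n₂ + ⋯ + k n_k`, the coordinate `t i` playing the role of `n_{i+1}`. -/
def weightedLength {k : ℕ} (t : Fin k → ℕ) : ℕ := ∑ i : Fin k, ((i : ℕ) + 1) * t i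

theorem le_weightedLength {k : ℕ} (t : Fin k → ℕ) (i : Fin k) : t i ≤ weightedLength t :=
  calc t i ≤ ((i : ℕ) + 1) * t i := Nat.le_mul_of_pos_left _ i.val.succ_pos
    _ ≤ weightedLength t :=
      single_le_sum (f := fun i : Fin k => ((i : ℕ) + 1) * t i) (fun _ _ => Nat.zero_le _)
        (mem_univ i)

theorem preimage_weightedLength_singleton (k n : ℕ) :
    (weightedLength ⁻¹' {n} : Set (Fin k → ℕ)) =
      ↑((Fintype.piFinset fun _ : Fin k => range (n + 1)).filter
        fun t => weightedLength t = n) := by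
  ext t
  simp only [Set.mem_preimage, Set.mem_singleton_iff, coe_filter, Fintype.mem_piFinset, mem_range,
    Set.mem_ofPred_eq, iff_and_self]
  intro ht i
  exact Nat.lt_succ_of_le (ht ▸ le_weightedLength t i)

noncomputable def poissonWeight {k : ℕ} (lam : ℝ) (t : Fin k → ℕ) : ℝ := ∏ i, lam ^ t i / (t i)!

theorem poissonOrderH_eq_sum_poissonWeight (k n : ℕ) (lam : ℝ) :
    poissonOrderH k n lam = ∑ t ∈ (Fintype.piFinset fun _ : Fin k => range (n + 1)).filter
      (fun t => weightedLength t = n), poissonWeight lam t :=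
  sum_congr rfl fun t _ => by rw [poissonWeight, prod_div_distrib, prod_pow_eq_pow_sum]

theorem hasSum_poissonWeight_fiber (k n : ℕ) (lam : ℝ) :
    HasSum (fun t : (weightedLength ⁻¹' {n} : Set (Fin k → ℕ)) => poissonWeight lam (t : Fin k → ℕ))
      (poissonOrderH k n lam) := by
  rw [preimage_weightedLength_singleton, poissonOrderH_eq_sum_poissonWeight]
  exact Finset.hasSum _ _

theorem hasSum_apply_mul_poissonWeight {k : ℕ} (lam : ℝ) (i : Fin k) :
    HasSum (fun t : Fin k → ℕ => (t i : ℝ) * poissonWeight lam t) (lam * Real.exp (k * lam)) := by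
  -- `tᵢ w(t)` is again a product, whose `i`-th factor is `n xⁿ/n!` at `x = λ`;
  -- the same series at `x = |λ|` give absolute convergence.
  let a : ℝ → Fin k → ℕ → ℝ := fun x j n => (if j = i then (n : ℝ) else 1) * (x ^ n / n !)
  have ha : ∀ x j, HasSum (a x j) ((if j = i then x else 1) * Real.exp x) := by
    intro x j
    by_cases hj : j = i
    · simpa [a, hj, mul_div_assoc] using Real.hasSum_nat_mul_pow_div_factorial x
    · simpa [a, hj] using Real.hasSum_pow_div_factorial x
  have hnorm : ∀ j, Summable fun n => ‖a lam j n‖ := fun j =>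
    (ha |lam| j).summable.congr fun n => by by_cases hj : j = i <;> simp [a, hj]
  have h := hasSum_pi_prod hnorm (ha lam)
  rw [prod_mul_distrib, prod_ite_eq' univ i, if_pos (mem_univ i), prod_const, Finset.card_univ,
    Fintype.card_fin, ← Real.exp_nat_mul] at h
  refine h.congr_fun fun t => ?_
  rw [prod_mul_distrib, prod_ite_eq' univ i, if_pos (mem_univ i), poissonWeight]

theorem hasSum_weightedLength_mul_poissonWeight (k : ℕ) (lam : ℝ) :
    HasSum (fun t : Fin k → ℕ => (weightedLength t : ℝ) * poissonWeight lam t)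
      (k * (k + 1) / 2 * lam * Real.exp (k * lam)) := by
  have h := hasSum_sum (s := (univ : Finset (Fin k))) fun i _ =>
    (hasSum_apply_mul_poissonWeight lam i).mul_left ((i : ℝ) + 1)
  rw [← sum_mul, Fin.sum_univ_cast_add_one, ← mul_assoc] at h
  refine h.congr_fun fun t => ?_
  simp only [weightedLength, Nat.cast_sum, Nat.cast_mul, Nat.cast_add_one, sum_mul, mul_assoc]

theorem hasSum_nat_mul_poissonOrderH (k : ℕ) (lam : ℝ) :
    HasSum (fun n : ℕ => n * poissonOrderH k n lam)
      (k * (k + 1) / 2 * lam * Real.exp (k * lam)) := by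
  refine ((hasSum_weightedLength_mul_poissonWeight k lam).tsum_fiberwise
    weightedLength).congr_fun fun n => ?_
  have hfib : HasSum (fun t : (weightedLength ⁻¹' {n} : Set (Fin k → ℕ)) =>
      (weightedLength (t : Fin k → ℕ) : ℝ) * poissonWeight lam (t : Fin k → ℕ))
      (n * poissonOrderH k n lam) := by
    refine ((hasSum_poissonWeight_fiber k n lam).mul_left (n : ℝ)).congr_fun fun t => ?_
    rw [show weightedLength (t : Fin k → ℕ) = n from t.2]
  exact hfib.tsum_eq.symm

theorem stmt_12_general (k : ℕ) (lam : ℝ) :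
    HasSum (fun n : ℕ => (n : ℝ) * poissonOrderPmf k n lam)
      ((k : ℝ) * ((k : ℝ) + 1) * lam / 2) := by
  have hmass : Real.exp (-(k * lam)) * (k * (k + 1) / 2 * lam * Real.exp (k * lam))
      = k * (k + 1) * lam / 2 := by
    rw [mul_left_comm, ← Real.exp_add, neg_add_cancel, Real.exp_zero]
    ring
  rw [← hmass]
  exact ((hasSum_nat_mul_poissonOrderH k lam).mul_left _).congr_fun fun n => by
    rw [poissonOrderPmf, mul_left_comm]

theorem stmt_12 (k : ℕ) (hk : 1 ≤ k) (lam : ℝ) (hlam : 0 < lam) :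
    HasSum (fun n : ℕ => (n : ℝ) * poissonOrderPmf k n lam)
      ((k : ℝ) * ((k : ℝ) + 1) * lam / 2) :=
  stmt_12_general k lam
end
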